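/- Let 1 ≤ i ≤ N, let I ∈ S_i and let λ be any weight. If i = N, then e_N f_I v_λ = (q² - q^{-2})^{-1} f_{I₁} (k_N² - k_N^{-2}) v_λ in M(λ). If i < N, then e_i f_I v_λ = (q² - q^{-2})^{-1} f_{I₁} f_{I₂} (q² k_i² - q^{-2} k_i^{-2}) v_λ in M(λ). -/

import Mathlib

noncomputable section

open FreeAlgebra

/-- `𝕜 = F(q)`, the field of rational functions over `F`. -/
abbrev kk (F : Type) [Field F] : Type := RatFunc F

/-- The variable `q`. -/
def qq (F : Type) [Field F] : kk F := RatFunc.X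

/-- `v = q²`. -/
def vv (F : Type) [Field F] : kk F := qq F ^ 2

/-- The balanced quantum integer `[n]_v`. -/
def qint (F : Type) [Field F] (n : ℤ) : kk F :=
  (vv F ^ n - vv F ^ (-n)) / (vv F - (vv F)⁻¹)

/-- The quantum factorial `[m]_v!`. -/
def qfact (F : Type) [Field F] (m : ℕ) : kk F :=
  ∏ j ∈ Finset.Icc 1 m, qint F j

/-- The balanced Gaussian binomial coefficient `C(n,i)_v`. -/
def qbinom (F : Type) [Field F] (n i : ℕ) : kk F :=
  qfact F n / (qfact F i * qfact F (n - i))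

/-- The Cartan matrix of `sl(N+1)`, with 1-based indices. -/
def cartan (i j : ℕ) : ℤ :=
  if i = j then 2 else if i + 1 = j ∨ j + 1 = i then -1 else 0

/-- Generators of `U_q(sl(N+1))`: `e i`, `f i`, `k i`, `kinv i` (0-based `i : Fin N`,
corresponding to the 1-based index `i+1`). -/
inductive Gen (N : ℕ) : Type
  | e : Fin N → Gen N
  | f : Fin N → Gen N
  | k : Fin N → Gen N
  | kinv : Fin N → Gen N

/-- The defining relations of `U_q(sl(N+1))`. -/
inductive UqRel (F : Type) [Field F] (N : ℕ) :
    FreeAlgebra (kk F) (Gen N) → FreeAlgebra (kk F) (Gen N) → Prop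
  | kkinv (i : Fin N) : UqRel F N (ι (kk F) (Gen.k i) * ι (kk F) (Gen.kinv i)) 1
  | kinvk (i : Fin N) : UqRel F N (ι (kk F) (Gen.kinv i) * ι (kk F) (Gen.k i)) 1
  | kcomm (i j : Fin N) :
      UqRel F N (ι (kk F) (Gen.k i) * ι (kk F) (Gen.k j))
        (ι (kk F) (Gen.k j) * ι (kk F) (Gen.k i))
  | ke (i j : Fin N) :
      UqRel F N (ι (kk F) (Gen.k i) * ι (kk F) (Gen.e j) * ι (kk F) (Gen.kinv i))
        ((qq F ^ cartan ((i : ℕ) + 1) ((j : ℕ) + 1)) • ι (kk F) (Gen.e j))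
  | kf (i j : Fin N) :
      UqRel F N (ι (kk F) (Gen.k i) * ι (kk F) (Gen.f j) * ι (kk F) (Gen.kinv i))
        ((qq F ^ (-cartan ((i : ℕ) + 1) ((j : ℕ) + 1))) • ι (kk F) (Gen.f j))
  | ef (i j : Fin N) :
      UqRel F N (ι (kk F) (Gen.e i) * ι (kk F) (Gen.f j) - ι (kk F) (Gen.f j) * ι (kk F) (Gen.e i))
        (if i = j then
          ((qq F ^ 2 - qq F ^ (-2 : ℤ))⁻¹) •
            ((ι (kk F) (Gen.k i)) ^ 2 - (ι (kk F) (Gen.kinv i)) ^ 2)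
        else 0)
  | serre_e_near (i j : Fin N) (h : (i : ℕ) + 1 = j ∨ (j : ℕ) + 1 = i) :
      UqRel F N
        ((ι (kk F) (Gen.e i)) ^ 2 * ι (kk F) (Gen.e j)
          - (qq F ^ 2 + qq F ^ (-2 : ℤ)) •
              (ι (kk F) (Gen.e i) * ι (kk F) (Gen.e j) * ι (kk F) (Gen.e i))
          + ι (kk F) (Gen.e j) * (ι (kk F) (Gen.e i)) ^ 2) 0
  | serre_f_near (i j : Fin N) (h : (i : ℕ) + 1 = j ∨ (j : ℕ) + 1 = i) :
      UqRel F N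
        ((ι (kk F) (Gen.f i)) ^ 2 * ι (kk F) (Gen.f j)
          - (qq F ^ 2 + qq F ^ (-2 : ℤ)) •
              (ι (kk F) (Gen.f i) * ι (kk F) (Gen.f j) * ι (kk F) (Gen.f i))
          + ι (kk F) (Gen.f j) * (ι (kk F) (Gen.f i)) ^ 2) 0
  | serre_e_far (i j : Fin N) (h : (i : ℕ) + 1 < j ∨ (j : ℕ) + 1 < i) :
      UqRel F N (ι (kk F) (Gen.e i) * ι (kk F) (Gen.e j))
        (ι (kk F) (Gen.e j) * ι (kk F) (Gen.e i))
  | serre_f_far (i j : Fin N) (h : (i : ℕ) + 1 < j ∨ (j : ℕ) + 1 < i) :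
      UqRel F N (ι (kk F) (Gen.f i) * ι (kk F) (Gen.f j))
        (ι (kk F) (Gen.f j) * ι (kk F) (Gen.f i))

/-- The quantized enveloping algebra `U = U_q(sl(N+1))`. -/
abbrev Uq (F : Type) [Field F] (N : ℕ) : Type := RingQuot (UqRel F N)

variable (F : Type) [Field F] (N : ℕ)

/-- The image of a generator in `U`. -/
def gen (g : Gen N) : Uq F N := RingQuot.mkAlgHom (kk F) (UqRel F N) (ι (kk F) g)

/-- `e_i` (1-based index `1 ≤ i ≤ N`; junk value `0` outside this range). -/
def egen (i : ℕ) : Uq F N :=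
  if h : 1 ≤ i ∧ i ≤ N then gen F N (Gen.e ⟨i - 1, by omega⟩) else 0

/-- `f_i` (1-based index). -/
def fgen (i : ℕ) : Uq F N :=
  if h : 1 ≤ i ∧ i ≤ N then gen F N (Gen.f ⟨i - 1, by omega⟩) else 0

/-- `k_i` (1-based index). -/
def kgen (i : ℕ) : Uq F N :=
  if h : 1 ≤ i ∧ i ≤ N then gen F N (Gen.k ⟨i - 1, by omega⟩) else 0

/-- `k_i⁻¹` (1-based index). -/
def kinvgen (i : ℕ) : Uq F N :=
  if h : 1 ≤ i ∧ i ≤ N then gen F N (Gen.kinv ⟨i - 1, by omega⟩) else 0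

/-- Auxiliary recursion: `fword i d = f_{i, i+1+d}`. -/
def fword (i : ℕ) : ℕ → Uq F N
  | 0 => fgen F N i
  | d + 1 =>
      qq F • (fword i d * fgen F N (i + 1 + d)) -
        (qq F)⁻¹ • (fgen F N (i + 1 + d) * fword i d)

/-- The quantum root vector `f_{i,j}` (for `1 ≤ i < j ≤ N+1`). -/
def fij (i j : ℕ) : Uq F N := fword F N i (j - i - 1)

/-- Product of `f_{a,b}` over successive entries of a list. -/
def fList : List ℕ → Uq F N
  | a :: b :: rest => fij F N a b * fList (b :: rest)
  | _ => 1

/-- `f_S` for a finite set `S` of indices. -/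
def fSet (S : Finset ℕ) : Uq F N := fList F N (S.sort (· ≤ ·))

/-- The index set `𝕀` of subsets of `{1,…,N+1}` containing `1` and `N+1`. -/
def II : Finset (Finset ℕ) :=
  (Finset.Icc 1 (N + 1)).powerset.filter fun I => 1 ∈ I ∧ N + 1 ∈ I

/-- `r(I) = {s - 1 : s ∈ {1,…,N+1} \ I}`. -/
def rSet (I : Finset ℕ) : Finset ℕ := (Finset.Icc 1 (N + 1) \ I).image (· - 1)

/-- `k_{σ_i} = k_1 ⋯ k_i`. -/
def kσ (i : ℕ) : Uq F N := ((List.range i).map fun j => kgen F N (j + 1)).prod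

/-- `K_{σ_i} = k_{σ_i}²`. -/
def Kσ (i : ℕ) : Uq F N := kσ F N i ^ 2

/-- `k_{σ_i}⁻¹ = k_1⁻¹ ⋯ k_i⁻¹`. -/
def kσinv (i : ℕ) : Uq F N := ((List.range i).map fun j => kinvgen F N (j + 1)).prod

/-- `K_{σ_i}⁻¹`. -/
def KσInv (i : ℕ) : Uq F N := kσinv F N i ^ 2

/-- The element `h_i = -q⁻¹ v^{-(i-1)} K_{σ_i}⁻¹ (K_{σ_i} v^i - K_{σ_i}⁻¹ v^{-i})/(v - v⁻¹) ∈ U`. -/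
def hElt (i : ℕ) : Uq F N :=
  (-(qq F)⁻¹ * vv F ^ (1 - (i : ℤ)) * (vv F - (vv F)⁻¹)⁻¹) •
    (KσInv F N i * (vv F ^ (i : ℤ) • Kσ F N i - vv F ^ (-(i : ℤ)) • KσInv F N i))

/-- `H_I = ∏_{i ∈ r(I)} h_i` (product taken in increasing order of indices). -/
def HI (I : Finset ℕ) : Uq F N := (((rSet N I).sort (· ≤ ·)).map (hElt F N)).prod

/-- A weight `λ` is recorded by its values `(λ, α_j)` for `1 ≤ j ≤ N`;
`pairσ lam i = (λ, σ_i) = (λ, α_1 + ⋯ + α_i)`. -/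
def pairσ (lam : ℕ → ℤ) (i : ℕ) : ℤ := ∑ j ∈ Finset.Icc 1 i, lam j

/-- The scalar `h_i(λ) = -q⁻¹ v^{-((λ,σ_i)+i-1)} [(λ,σ_i)+i]_v`. -/
def hval (lam : ℕ → ℤ) (i : ℕ) : kk F :=
  -(qq F)⁻¹ * vv F ^ (-(pairσ lam i + (i : ℤ) - 1)) * qint F (pairσ lam i + (i : ℤ))

/-- The scalar `H_I(λ) = ∏_{i ∈ r(I)} h_i(λ)`. -/
def HIval (lam : ℕ → ℤ) (I : Finset ℕ) : kk F := ∏ i ∈ rSet N I, hval F lam i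

/-- The left ideal `J_λ` of `U` generated by `e_1, …, e_N` and the `k_j - q^{(λ,α_j)}`. -/
def vermaIdeal (lam : ℕ → ℤ) : Submodule (Uq F N) (Uq F N) :=
  Submodule.span (Uq F N)
    ({x | ∃ j, 1 ≤ j ∧ j ≤ N ∧ x = egen F N j} ∪
      {x | ∃ j, 1 ≤ j ∧ j ≤ N ∧
        x = kgen F N j - algebraMap (kk F) (Uq F N) (qq F ^ lam j)})

/-- The Verma module `M(λ) = U/J_λ`. -/
abbrev Verma (lam : ℕ → ℤ) : Type := Uq F N ⧸ vermaIdeal F N lam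

/-- The highest weight vector `v_λ`, the image of `1` in `M(λ)`. -/
def hw (lam : ℕ → ℤ) : Verma F N lam := Submodule.Quotient.mk 1

/-- The candidate Shapovalov element `Θ_η = Σ_{I ∈ 𝕀} f_I H_I`. -/
def Theta : Uq F N := ∑ I ∈ II N, fSet F N I * HI F N I

/-- `D^n(λ)`: the `(n-1) × (n-1)` matrix over `U` with `(i,j)` entry (1-based)
`f_{i,j+1}` if `i ≤ j`, `-h_j(λ)·1` if `i = j+1`, and `0` otherwise. -/
def Dmat (lam : ℕ → ℤ) (n : ℕ) : Matrix (Fin (n - 1)) (Fin (n - 1)) (Uq F N) :=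
  Matrix.of fun i j =>
    if (i : ℕ) ≤ (j : ℕ) then fij F N ((i : ℕ) + 1) ((j : ℕ) + 2)
    else if (i : ℕ) = (j : ℕ) + 1 then
      -(algebraMap (kk F) (Uq F N) (hval F lam ((j : ℕ) + 1)))
    else 0

/-- The left-to-right determinant of a matrix with noncommutative entries. -/
def ldet {m : ℕ} (B : Matrix (Fin m) (Fin m) (Uq F N)) : Uq F N :=
  ∑ w : Equiv.Perm (Fin m),
    ((Equiv.Perm.sign w : ℤˣ) : ℤ) • ((List.finRange m).map fun j => B (w j) j).prod

end

/-! Split `f_I = f_{I₁} f_i f_{I₂}`. The root vectors in `f_{I₁}` and `f_{I₂}` only involve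
generators `f_m` with `m ≠ i`, so `e_i` moves past them and
`e_i f_I = f_I e_i + f_{I₁} [e_i, f_i] f_{I₂}`, where the first term kills `v_λ`. If `i = N`
then `I₂ = {N+1}` and `f_{I₂} = 1`. If `i < N`, the first factor of `f_{I₂}` is `f_{i+1,b}`,
which `k_i` rescales by `q`, while `k_i` commutes with the remaining factors; hence `k_i^{±2}`
pass through `f_{I₂}` at the cost of `q^{±2}`. -/

lemma semiconjBy_of_mul_mul_eq {A : Type*} [Monoid A] {k k' x y : A} (hk : k' * k = 1)
    (h : k * x * k' = y) : SemiconjBy k x y := by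
  rw [SemiconjBy, ← h, mul_assoc _ k', hk, mul_one]

lemma semiconjBy_of_mul_mul_eq_symm {A : Type*} [Monoid A] {k k' x y : A} (hk : k' * k = 1)
    (h : k * x * k' = y) : SemiconjBy k' y x := by
  rw [SemiconjBy, ← h, ← mul_assoc, ← mul_assoc, hk, one_mul]

lemma SemiconjBy.sq_left_of_smul {M A : Type*} [Monoid M] [Monoid A] [MulAction M A]
    [SMulCommClass M A A] [IsScalarTower M A A] {k x : A} {c : M}
    (h : SemiconjBy k x (c • x)) : SemiconjBy (k ^ 2) x (c ^ 2 • x) := by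
  rw [sq, sq, ← smul_smul]
  exact (h.smul_right c).mul_left h

lemma Finset.sort_union_of_forall_lt {α : Type*} [LinearOrder α] {s t : Finset α}
    (h : ∀ x ∈ s, ∀ y ∈ t, x < y) : (s ∪ t).sort = s.sort ++ t.sort := by
  have hlt : ∀ x ∈ s.sort, ∀ y ∈ t.sort, x < y := fun x hx y hy =>
    h x ((s.mem_sort _).mp hx) y ((t.mem_sort _).mp hy)
  have hnd : (s.sort ++ t.sort).Nodup := List.nodup_append.mpr
    ⟨s.sort_nodup _, t.sort_nodup _, fun x hx y hy => (hlt x hx y hy).ne⟩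
  have hset : (s.sort ++ t.sort).toFinset = s ∪ t := by ext; simp
  rw [← hset, List.toFinset_sort _ hnd]
  exact List.pairwise_append.mpr
    ⟨s.pairwise_sort _, t.pairwise_sort _, fun x hx y hy => (hlt x hx y hy).le⟩

section Generators

variable {F : Type} [Field F] {N : ℕ}

lemma qq_ne_zero : qq F ≠ 0 := RatFunc.X_ne_zero

lemma gen_kinv_mul_gen_k (i : Fin N) : gen F N (.kinv i) * gen F N (.k i) = 1 := by
  simpa [gen] using RingQuot.mkAlgHom_rel (kk F) (UqRel.kinvk (F := F) i)

lemma gen_k_mul_gen_f_mul_gen_kinv (i j : Fin N) :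
    gen F N (.k i) * gen F N (.f j) * gen F N (.kinv i) =
      qq F ^ (-cartan (i + 1) (j + 1)) • gen F N (.f j) := by
  simpa [gen] using RingQuot.mkAlgHom_rel (kk F) (UqRel.kf (F := F) i j)

lemma gen_e_mul_gen_f_sub (i j : Fin N) :
    gen F N (.e i) * gen F N (.f j) - gen F N (.f j) * gen F N (.e i) =
      if i = j then (qq F ^ 2 - qq F ^ (-2 : ℤ))⁻¹ •
        (gen F N (.k i) ^ 2 - gen F N (.kinv i) ^ 2) else 0 := by
  have h := RingQuot.mkAlgHom_rel (kk F) (UqRel.ef (F := F) i j)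
  split_ifs at h ⊢ <;> simpa [gen] using h

lemma egen_eq_gen {i : ℕ} (h1 : 1 ≤ i) (h2 : i ≤ N) :
    egen F N i = gen F N (.e ⟨i - 1, by omega⟩) := dif_pos ⟨h1, h2⟩

lemma fgen_eq_gen {i : ℕ} (h1 : 1 ≤ i) (h2 : i ≤ N) :
    fgen F N i = gen F N (.f ⟨i - 1, by omega⟩) := dif_pos ⟨h1, h2⟩

lemma kgen_eq_gen {i : ℕ} (h1 : 1 ≤ i) (h2 : i ≤ N) :
    kgen F N i = gen F N (.k ⟨i - 1, by omega⟩) := dif_pos ⟨h1, h2⟩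

lemma kinvgen_eq_gen {i : ℕ} (h1 : 1 ≤ i) (h2 : i ≤ N) :
    kinvgen F N i = gen F N (.kinv ⟨i - 1, by omega⟩) := dif_pos ⟨h1, h2⟩

lemma fgen_eq_zero {j : ℕ} (h : ¬(1 ≤ j ∧ j ≤ N)) : fgen F N j = 0 := dif_neg h

lemma egen_mul_fgen_self {i : ℕ} (h1 : 1 ≤ i) (h2 : i ≤ N) :
    egen F N i * fgen F N i = fgen F N i * egen F N i +
      (qq F ^ 2 - qq F ^ (-2 : ℤ))⁻¹ • (kgen F N i ^ 2 - kinvgen F N i ^ 2) := by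
  rw [egen_eq_gen h1 h2, fgen_eq_gen h1 h2, kgen_eq_gen h1 h2, kinvgen_eq_gen h1 h2,
    ← sub_eq_iff_eq_add', gen_e_mul_gen_f_sub, if_pos rfl]

lemma commute_egen_fgen {i j : ℕ} (h1 : 1 ≤ i) (h2 : i ≤ N) (hij : i ≠ j) :
    Commute (egen F N i) (fgen F N j) := by
  by_cases hj : 1 ≤ j ∧ j ≤ N
  · rw [egen_eq_gen h1 h2, fgen_eq_gen hj.1 hj.2, Commute, SemiconjBy, ← sub_eq_zero,
      gen_e_mul_gen_f_sub, if_neg (by simp only [Fin.mk.injEq]; omega)]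
  · rw [fgen_eq_zero hj]
    exact Commute.zero_right _

lemma semiconjBy_kgen_fgen {i : ℕ} (h1 : 1 ≤ i) (h2 : i ≤ N) (j : ℕ) :
    SemiconjBy (kgen F N i) (fgen F N j) (qq F ^ (-cartan i j) • fgen F N j) := by
  by_cases hj : 1 ≤ j ∧ j ≤ N
  · rw [kgen_eq_gen h1 h2, fgen_eq_gen hj.1 hj.2]
    refine semiconjBy_of_mul_mul_eq (gen_kinv_mul_gen_k _) ?_
    rw [gen_k_mul_gen_f_mul_gen_kinv, Fin.val_mk, Fin.val_mk, Nat.sub_add_cancel h1,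
      Nat.sub_add_cancel hj.1]
  · simp [fgen_eq_zero hj]

lemma semiconjBy_kinvgen_fgen {i : ℕ} (h1 : 1 ≤ i) (h2 : i ≤ N) (j : ℕ) :
    SemiconjBy (kinvgen F N i) (fgen F N j) (qq F ^ cartan i j • fgen F N j) := by
  by_cases hj : 1 ≤ j ∧ j ≤ N
  · rw [kinvgen_eq_gen h1 h2, fgen_eq_gen hj.1 hj.2]
    have h := (semiconjBy_of_mul_mul_eq_symm (gen_kinv_mul_gen_k _)
      (gen_k_mul_gen_f_mul_gen_kinv (F := F) (N := N) ⟨i - 1, by omega⟩ ⟨j - 1, by omega⟩)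
      ).smul_right (qq F ^ cartan i j)
    rwa [Fin.val_mk, Fin.val_mk, Nat.sub_add_cancel h1, Nat.sub_add_cancel hj.1, smul_smul,
      ← zpow_add₀ qq_ne_zero, add_neg_cancel, zpow_zero, one_smul] at h
  · simp [fgen_eq_zero hj]

lemma cartan_self_succ (i : ℕ) : cartan i (i + 1) = -1 := by
  simp [cartan]

lemma cartan_of_succ_lt {i j : ℕ} (h : i + 1 < j) : cartan i j = 0 := by
  simp only [cartan]; rw [if_neg (by omega), if_neg (by omega)]

lemma commute_kgen_fgen_of_succ_lt {i j : ℕ} (h1 : 1 ≤ i) (h2 : i ≤ N) (hij : i + 1 < j) :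
    Commute (kgen F N i) (fgen F N j) := by
  have h := semiconjBy_kgen_fgen (F := F) h1 h2 j
  rwa [cartan_of_succ_lt hij, neg_zero, zpow_zero, one_smul] at h

lemma commute_kinvgen_fgen_of_succ_lt {i j : ℕ} (h1 : 1 ≤ i) (h2 : i ≤ N) (hij : i + 1 < j) :
    Commute (kinvgen F N i) (fgen F N j) := by
  have h := semiconjBy_kinvgen_fgen (F := F) h1 h2 j
  rwa [cartan_of_succ_lt hij, zpow_zero, one_smul] at h

end Generators

section RootVectors

variable {F : Type} [Field F] {N : ℕ}

lemma fij_succ (a : ℕ) : fij F N a (a + 1) = fgen F N a := by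
  simp [fij, fword]

lemma fword_mem (A : Subalgebra (kk F) (Uq F N)) {a : ℕ} :
    ∀ {d : ℕ}, (∀ m, a ≤ m → m ≤ a + d → fgen F N m ∈ A) → fword F N a d ∈ A
  | 0, h => h a le_rfl le_rfl
  | d + 1, h => by
    have hw := fword_mem A (d := d) fun m hm hm' => h m hm (by omega)
    have hg := h (a + 1 + d) (by omega) (by omega)
    exact A.sub_mem (A.smul_mem (A.mul_mem hw hg) _) (A.smul_mem (A.mul_mem hg hw) _)

lemma fList_mem (A : Subalgebra (kk F) (Uq F N)) {lo hi : ℕ}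
    (h : ∀ m, lo ≤ m → m < hi → fgen F N m ∈ A) :
    ∀ l : List ℕ, l.Pairwise (· < ·) → (∀ x ∈ l, lo ≤ x ∧ x ≤ hi) → fList F N l ∈ A
  | [], _, _ => A.one_mem
  | [_], _, _ => A.one_mem
  | a :: b :: l, hl, hbound => by
    have hab : a < b := List.rel_of_pairwise_cons hl (by simp)
    have ha := hbound a (by simp)
    have hb := hbound b (by simp)
    refine A.mul_mem (fword_mem A fun m hm hm' => h m (by omega) (by omega)) ?_
    exact fList_mem A h (b :: l) (List.Pairwise.of_cons hl)
      fun x hx => hbound x (List.mem_cons_of_mem a hx)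

lemma fSet_mem (A : Subalgebra (kk F) (Uq F N)) {lo hi : ℕ} {S : Finset ℕ}
    (hS : ∀ x ∈ S, lo ≤ x ∧ x ≤ hi) (h : ∀ m, lo ≤ m → m < hi → fgen F N m ∈ A) :
    fSet F N S ∈ A :=
  fList_mem A h _ (S.sortedLT_sort.pairwise) fun x hx => hS x ((S.mem_sort _).mp hx)

lemma commute_fSet {x : Uq F N} {lo hi : ℕ} {S : Finset ℕ}
    (hS : ∀ x ∈ S, lo ≤ x ∧ x ≤ hi) (h : ∀ m, lo ≤ m → m < hi → Commute x (fgen F N m)) :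
    Commute x (fSet F N S) := by
  have := fSet_mem (Subalgebra.centralizer (kk F) {x}) hS fun m hm hm' =>
    (Subalgebra.mem_centralizer_iff _).mpr fun _ hg => hg ▸ (h m hm hm').eq
  exact (Subalgebra.mem_centralizer_iff _).mp this x rfl

lemma semiconjBy_fword {k : Uq F N} {c : kk F} {a : ℕ}
    (hbase : SemiconjBy k (fgen F N a) (c • fgen F N a))
    (hfar : ∀ m, a < m → Commute k (fgen F N m)) :
    ∀ d, SemiconjBy k (fword F N a d) (c • fword F N a d)
  | 0 => hbase
  | d + 1 => by
    have hw := semiconjBy_fword hbase hfar d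
    have hg := hfar (a + 1 + d) (by omega)
    have h := ((hw.mul_right hg).smul_right (qq F)).sub_right
      ((SemiconjBy.mul_right hg hw).smul_right (qq F)⁻¹)
    simp only [fword, smul_sub, smul_comm c, smul_mul_assoc, mul_smul_comm] at h ⊢
    exact h

end RootVectors

section ProductsOfRootVectors

variable {F : Type} [Field F] {N : ℕ}

lemma fList_append_cons (a : ℕ) (l₂ : List ℕ) :
    ∀ l₁ : List ℕ, fList F N (l₁ ++ a :: l₂) = fList F N (l₁ ++ [a]) * fList F N (a :: l₂)
  | [] => (one_mul _).symm
  | [_] => by simp [fList]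
  | x :: y :: l₁ => by
    simp only [List.cons_append, fList]
    rw [← List.cons_append, ← List.cons_append, fList_append_cons a l₂ (y :: l₁), mul_assoc]

lemma fSet_eq_mul_of_mem {S : Finset ℕ} {a : ℕ} (ha : a ∈ S) :
    fSet F N S = fSet F N (S.filter (· ≤ a)) * fSet F N (S.filter (a ≤ ·)) := by
  have hS : S = S.filter (· ≤ a) ∪ S.filter (a < ·) := by grind
  have hle : S.filter (· ≤ a) = S.filter (· < a) ∪ {a} := by grind
  have hge : S.filter (a ≤ ·) = {a} ∪ S.filter (a < ·) := by grind
  conv_lhs => rw [fSet, hS, Finset.sort_union_of_forall_lt (by grind)]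
  rw [fSet, fSet, hle, hge, Finset.sort_union_of_forall_lt (by grind),
    Finset.sort_union_of_forall_lt (by grind), Finset.sort_singleton, List.append_assoc,
    List.singleton_append]
  exact fList_append_cons _ _ _

lemma fSet_singleton (a : ℕ) : fSet F N {a} = 1 := by
  rw [fSet, Finset.sort_singleton]
  rfl

lemma fSet_insert_of_isLeast {S : Finset ℕ} {a b : ℕ} (hab : a < b)
    (hb : IsLeast (S : Set ℕ) b) :
    fSet F N (insert a S) = fij F N a b * fSet F N S := by
  have hsort : S.sort = b :: (S.erase b).sort := by
    conv_lhs => rw [← Finset.insert_erase (Finset.mem_coe.mp hb.1)]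
    exact Finset.sort_insert _ (fun x hx => hb.2 (Finset.mem_of_mem_erase hx))
      (Finset.notMem_erase b S)
  have ha : ∀ x ∈ S, a ≤ x := fun x hx => (hab.trans_le (hb.2 hx)).le
  have haS : a ∉ S := fun h => (hab.trans_le (hb.2 h)).false
  rw [fSet, Finset.sort_insert _ ha haS, hsort, fSet, hsort]
  rfl

lemma semiconjBy_fSet_of_isLeast {k : Uq F N} {c : kk F} {S : Finset ℕ} {a b : ℕ}
    (hbase : SemiconjBy k (fgen F N a) (c • fgen F N a))
    (hfar : ∀ m, a < m → Commute k (fgen F N m))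
    (ha : IsLeast (S : Set ℕ) a) (hb : b ∈ S) (hab : a < b) :
    SemiconjBy k (fSet F N S) (c • fSet F N S) := by
  set T := S.erase a
  have hT : T.Nonempty := ⟨b, Finset.mem_erase.mpr ⟨hab.ne', hb⟩⟩
  have hTa : ∀ x ∈ T, a < x := fun x hx =>
    lt_of_le_of_ne (ha.2 (Finset.mem_of_mem_erase hx)) (Finset.ne_of_mem_erase hx).symm
  have hsplit : fSet F N S = fij F N a (T.min' hT) * fSet F N T := by
    conv_lhs => rw [← Finset.insert_erase (Finset.mem_coe.mp ha.1)]
    exact fSet_insert_of_isLeast (hTa _ (T.min'_mem hT)) (T.isLeast_min' hT)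
  have hcomm : Commute k (fSet F N T) :=
    commute_fSet (lo := a + 1) (hi := T.max' hT)
      (fun x hx => ⟨hTa x hx, T.le_max' x hx⟩) fun m hm _ => hfar m hm
  rw [hsplit, ← smul_mul_assoc]
  exact (semiconjBy_fword hbase hfar _).mul_right hcomm

end ProductsOfRootVectors

section HighestWeightVector

variable {F : Type} [Field F] {N : ℕ}

lemma egen_mul_fSet {I : Finset ℕ} {i : ℕ} (h1 : 1 ≤ i) (h2 : i ≤ N) (hiI : i ∈ I)
    (hi1I : i + 1 ∈ I) :
    egen F N i * fSet F N I = fSet F N I * egen F N i +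
      (qq F ^ 2 - qq F ^ (-2 : ℤ))⁻¹ • (fSet F N (I.filter (· ≤ i)) *
        (kgen F N i ^ 2 - kinvgen F N i ^ 2) * fSet F N (I.filter fun x => i + 1 ≤ x)) := by
  set A := fSet F N (I.filter (· ≤ i))
  set B := fSet F N (I.filter fun x => i + 1 ≤ x)
  have hge : I.filter (i ≤ ·) = insert i (I.filter fun x => i + 1 ≤ x) := by grind
  have hsplit : fSet F N I = A * (fgen F N i * B) := by
    rw [fSet_eq_mul_of_mem hiI, hge, fSet_insert_of_isLeast (lt_add_one i), fij_succ]
    exact ⟨by simpa using hi1I, fun x hx => (Finset.mem_filter.mp hx).2⟩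
  have hA : Commute (egen F N i) A :=
    commute_fSet (lo := 0) (hi := i) (fun x hx => ⟨x.zero_le, (Finset.mem_filter.mp hx).2⟩)
      fun m _ hm => commute_egen_fgen h1 h2 hm.ne'
  have hB : Commute (egen F N i) B :=
    commute_fSet (lo := i + 1) (hi := I.sup id)
      (fun x hx => ⟨(Finset.mem_filter.mp hx).2,
        Finset.le_sup (f := id) (Finset.mem_filter.mp hx).1⟩)
      fun m hm _ => commute_egen_fgen h1 h2 (by omega)
  rw [hsplit, ← mul_assoc, hA.eq, mul_assoc, ← mul_assoc (egen F N i),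
    egen_mul_fgen_self h1 h2, add_mul, mul_assoc (fgen F N i), hB.eq]
  simp only [mul_add, smul_mul_assoc, mul_smul_comm, mul_assoc]

lemma kgen_sq_sub_mul_fSet {S : Finset ℕ} {i b : ℕ} (h1 : 1 ≤ i) (h2 : i ≤ N)
    (hS : IsLeast (S : Set ℕ) (i + 1)) (hb : b ∈ S) (hib : i + 1 < b) :
    (kgen F N i ^ 2 - kinvgen F N i ^ 2) * fSet F N S =
      fSet F N S * (qq F ^ 2 • kgen F N i ^ 2 - qq F ^ (-2 : ℤ) • kinvgen F N i ^ 2) := by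
  have hk := (semiconjBy_fSet_of_isLeast (semiconjBy_kgen_fgen (F := F) h1 h2 (i + 1))
    (fun m hm => commute_kgen_fgen_of_succ_lt h1 h2 hm) hS hb hib).sq_left_of_smul
  have hkinv := (semiconjBy_fSet_of_isLeast (semiconjBy_kinvgen_fgen (F := F) h1 h2 (i + 1))
    (fun m hm => commute_kinvgen_fgen_of_succ_lt h1 h2 hm) hS hb hib).sq_left_of_smul
  rw [cartan_self_succ, ← zpow_natCast, ← zpow_mul] at hk hkinv
  rw [sub_mul, hk.eq, hkinv.eq, mul_sub, mul_smul_comm, mul_smul_comm, smul_mul_assoc,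
    smul_mul_assoc]
  norm_num

lemma smul_hw (lam : ℕ → ℤ) (u : Uq F N) :
    u • hw F N lam = Submodule.Quotient.mk u := by
  rw [hw, ← Submodule.Quotient.mk_smul, smul_eq_mul, mul_one]

lemma mul_egen_smul_hw (lam : ℕ → ℤ) (x : Uq F N) {i : ℕ} (h1 : 1 ≤ i) (h2 : i ≤ N) :
    (x * egen F N i) • hw F N lam = 0 := by
  rw [smul_hw, Submodule.Quotient.mk_eq_zero]
  exact (vermaIdeal F N lam).smul_mem x (Submodule.subset_span (Or.inl ⟨i, h1, h2, rfl⟩))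

end HighestWeightVector

theorem stmt6_general (F : Type) [Field F] (N : ℕ) (lam : ℕ → ℤ) (i : ℕ)
    (h1 : 1 ≤ i) (h2 : i ≤ N) (I : Finset ℕ) (hI : I ∈ II N)
    (hiI : i ∈ I) (hi1I : i + 1 ∈ I) :
    (i = N →
      egen F N i • (fSet F N I • hw F N lam) =
        ((qq F ^ 2 - qq F ^ (-2 : ℤ))⁻¹ •
          (fSet F N (I.filter (· ≤ i)) *
            ((kgen F N i) ^ 2 - (kinvgen F N i) ^ 2))) • hw F N lam) ∧
    (i < N →
      egen F N i • (fSet F N I • hw F N lam) =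
        ((qq F ^ 2 - qq F ^ (-2 : ℤ))⁻¹ •
          (fSet F N (I.filter (· ≤ i)) * fSet F N (I.filter fun x => i + 1 ≤ x) *
            (qq F ^ 2 • (kgen F N i) ^ 2 -
              qq F ^ (-2 : ℤ) • (kinvgen F N i) ^ 2))) • hw F N lam) := by
  obtain ⟨hIsub, -, hN1I⟩ := Finset.mem_filter.mp hI
  have hIle : ∀ x ∈ I, x ≤ N + 1 := fun x hx =>
    (Finset.mem_Icc.mp (Finset.mem_powerset.mp hIsub hx)).2
  have key := congrArg (· • hw F N lam) (egen_mul_fSet (F := F) h1 h2 hiI hi1I)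
  simp only [add_smul, mul_egen_smul_hw lam _ h1 h2, zero_add, ← smul_smul] at key
  refine ⟨fun hiN => ?_, fun hiN => ?_⟩
  · subst hiN
    have hI₂ : I.filter (fun x => i + 1 ≤ x) = {i + 1} := by
      ext x; simp only [Finset.mem_filter, Finset.mem_singleton]
      refine ⟨fun hx => le_antisymm (hIle x hx.1) hx.2, ?_⟩
      rintro rfl
      exact ⟨hN1I, le_rfl⟩
    rw [key, hI₂, fSet_singleton, mul_one]
  · have hS : IsLeast ((I.filter fun x => i + 1 ≤ x : Finset ℕ) : Set ℕ) (i + 1) :=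
      ⟨by simpa using hi1I, fun x hx => (Finset.mem_filter.mp hx).2⟩
    rw [key, mul_assoc _ _ (fSet F N _), kgen_sq_sub_mul_fSet h1 h2 hS
      (Finset.mem_filter.mpr ⟨hN1I, by omega⟩) (by omega), ← mul_assoc]

/-- for `I ∈ S_i` and any weight `λ`: if `i = N` then
`e_N f_I v_λ = (q²-q^{-2})⁻¹ f_{I₁} (k_N² - k_N^{-2}) v_λ`; if `i < N` then
`e_i f_I v_λ = (q²-q^{-2})⁻¹ f_{I₁} f_{I₂} (q² k_i² - q^{-2} k_i^{-2}) v_λ` in `M(λ)`. -/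
theorem stmt6 (F : Type) [Field F] (N : ℕ) (hN : 1 ≤ N) (lam : ℕ → ℤ) (i : ℕ)
    (h1 : 1 ≤ i) (h2 : i ≤ N) (I : Finset ℕ) (hI : I ∈ II N)
    (hiI : i ∈ I) (hi1I : i + 1 ∈ I) :
    (i = N →
      egen F N i • (fSet F N I • hw F N lam) =
        ((qq F ^ 2 - qq F ^ (-2 : ℤ))⁻¹ •
          (fSet F N (I.filter (· ≤ i)) *
            ((kgen F N i) ^ 2 - (kinvgen F N i) ^ 2))) • hw F N lam) ∧
    (i < N →
      egen F N i • (fSet F N I • hw F N lam) =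
        ((qq F ^ 2 - qq F ^ (-2 : ℤ))⁻¹ •
          (fSet F N (I.filter (· ≤ i)) * fSet F N (I.filter fun x => i + 1 ≤ x) *
            (qq F ^ 2 • (kgen F N i) ^ 2 -
              qq F ^ (-2 : ℤ) • (kinvgen F N i) ^ 2))) • hw F N lam) :=
  stmt6_general F N lam i h1 h2 I hI hiI hi1I
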